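/- arXiv:1910.03838 — 3 statements merged into one kernel-verified Lean document; each statement's English description precedes it below -/
import Mathlib

section
/- Let G ∈ ℤ^{n×n} be a symmetric, positive definite, unimodular matrix. Then the vector z ∈ ℤⁿ defined by z_k = (G⁻¹)_{kk} for k = 1, …, n satisfies: for all y ∈ ℤⁿ, yᵀGz ≡ yᵀGy (mod 2). In particular, a characteristic coefficient vector for G exists. -/
open Matrix

private lemma zmod2_sq (a : ZMod 2) : a * a = a := by revert a; decide

/-- Quadratic form identity over `ZMod 2`: for symmetric `A`,
`v ⬝ᵥ A *ᵥ v = ∑ i, A i i * v i`. -/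
private lemma quad_diag {n : ℕ} (A : Matrix (Fin n) (Fin n) (ZMod 2)) (hA : A.IsSymm)
    (v : Fin n → ZMod 2) :
    v ⬝ᵥ A.mulVec v = ∑ i, A i i * v i := by
  classical
  have expand : v ⬝ᵥ A.mulVec v
      = ∑ p ∈ Finset.univ ×ˢ (Finset.univ : Finset (Fin n)),
          v p.1 * A p.1 p.2 * v p.2 := by
    rw [Finset.sum_product]
    simp [dotProduct, mulVec, Finset.mul_sum, mul_assoc]
  have hoff : ∑ p ∈ (Finset.univ : Finset (Fin n)).offDiag,
      v p.1 * A p.1 p.2 * v p.2 = 0 := by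
    apply Finset.sum_involution (fun p _ => (p.2, p.1))
    · intro p hp
      have hsym : A p.2 p.1 = A p.1 p.2 := by
        conv_lhs => rw [← hA]
        rfl
      simp only [hsym]
      rw [show v p.1 * A p.1 p.2 * v p.2 + v p.2 * A p.1 p.2 * v p.1
          = v p.1 * A p.1 p.2 * v p.2 * 2 by ring,
        show (2 : ZMod 2) = 0 by decide, mul_zero]
    · intro p hp h
      rw [Finset.mem_offDiag] at hp
      intro hc
      have h6 := congrArg Prod.fst hc
      simp at h6
      exact hp.2.2 h6.symm
    · intro p hp
      rw [Finset.mem_offDiag] at hp ⊢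
      exact ⟨Finset.mem_univ _, Finset.mem_univ _, hp.2.2.symm⟩
    · intro p hp; rfl
  rw [expand, ← Finset.diag_union_offDiag,
    Finset.sum_union (Finset.disjoint_diag_offDiag _), Finset.sum_diag, hoff, add_zero]
  refine Finset.sum_congr rfl fun i _ => ?_
  rw [show v i * A i i * v i = A i i * (v i * v i) by ring, zmod2_sq]

/-- The diagonal of `G⁻¹` is a characteristic coefficient vector for `G`:
for every `y ∈ ℤⁿ`, `yᵀGz ≡ yᵀGy (mod 2)` where `z_k = (G⁻¹)_{kk}`. -/
theorem charVec_exists {n : ℕ} (G : Matrix (Fin n) (Fin n) ℤ)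
    (hsymm : G.IsSymm) (hpos : (G.map (Int.cast : ℤ → ℝ)).PosDef)
    (hdet : G.det = 1 ∨ G.det = -1) :
    ∀ y : Fin n → ℤ,
      y ⬝ᵥ G.mulVec (fun k => G⁻¹ k k) ≡ y ⬝ᵥ G.mulVec y [ZMOD 2] := by
  intro y
  have hu : IsUnit G.det := by
    rcases hdet with h | h <;> simp [h, Int.isUnit_iff]
  -- cast everything to ZMod 2
  set A : Matrix (Fin n) (Fin n) (ZMod 2) := G.map (Int.cast : ℤ → ZMod 2) with hAdef
  set B : Matrix (Fin n) (Fin n) (ZMod 2) := G⁻¹.map (Int.cast : ℤ → ZMod 2) with hBdef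
  have hmap : ∀ M N : Matrix (Fin n) (Fin n) ℤ,
      (M * N).map (Int.cast : ℤ → ZMod 2)
        = M.map (Int.cast : ℤ → ZMod 2) * N.map (Int.cast : ℤ → ZMod 2) := by
    intro M N
    ext i j
    simp [Matrix.mul_apply, Matrix.map_apply]
  have hAB : A * B = 1 := by
    rw [hAdef, hBdef, ← hmap, Matrix.mul_nonsing_inv _ hu]
    ext i j
    simp [Matrix.map_apply, Matrix.one_apply]
  have hBA : B * A = 1 := by
    rw [hAdef, hBdef, ← hmap, Matrix.nonsing_inv_mul _ hu]
    ext i j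
    simp [Matrix.map_apply, Matrix.one_apply]
  have hAsymm : A.IsSymm := by
    rw [hAdef, Matrix.IsSymm, ← Matrix.transpose_map, hsymm]
  have hBsymm : B.IsSymm := by
    have : Bᵀ = Bᵀ * (A * B) := by rw [hAB, mul_one]
    have h5 : Bᵀ * A = 1 := by
      rw [← hAsymm.eq, ← Matrix.transpose_mul, hAB, Matrix.transpose_one]
    rw [Matrix.IsSymm, this, ← mul_assoc, h5, one_mul]
  -- key: B *ᵥ (diag A) = diag B
  have key : B.mulVec (fun i => A i i) = fun k => B k k := by
    funext k
    have h1 : B.mulVec (fun i => A i i) k = ∑ i, A i i * B k i := by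
      simp [mulVec, dotProduct, mul_comm]
    have h2 : (B k) ⬝ᵥ A.mulVec (B k) = ∑ i, A i i * B k i :=
      quad_diag A hAsymm (B k)
    have h3 : A.mulVec (B k) = fun i => (1 : Matrix (Fin n) (Fin n) (ZMod 2)) i k := by
      funext i
      have : B k = fun j => B j k := by
        funext j
        exact congrFun (congrFun hBsymm.symm k) j
      rw [this]
      simp only [mulVec, dotProduct]
      rw [← hAB]
      simp [Matrix.mul_apply]
    have h4 : (B k) ⬝ᵥ A.mulVec (B k) = B k k := by
      rw [h3]
      simp [dotProduct, Matrix.one_apply, mul_comm]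
    rw [h1, ← h2, h4]
  -- key2 : A *ᵥ diag B = diag A
  have key2 : A.mulVec (fun k => B k k) = fun i => A i i := by
    rw [← key, Matrix.mulVec_mulVec, hAB]
    simp [Matrix.one_mulVec]
  -- now cast the goal
  have cast_iff := ZMod.intCast_eq_intCast_iff
    (y ⬝ᵥ G.mulVec (fun k => G⁻¹ k k)) (y ⬝ᵥ G.mulVec y) 2
  rw [show ((2 : ℕ) : ℤ) = 2 by norm_num] at cast_iff
  refine cast_iff.mp ?_
  -- express casts of dot products
  have castdot : ∀ (v w : Fin n → ℤ),
      ((v ⬝ᵥ w : ℤ) : ZMod 2) = (fun i => ((v i : ZMod 2))) ⬝ᵥ (fun i => ((w i : ZMod 2))) := by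
    intro v w
    simp [dotProduct]
  have castmul : ∀ (w : Fin n → ℤ) (i : Fin n),
      (((G.mulVec w) i : ℤ) : ZMod 2) = (A.mulVec fun j => ((w j : ZMod 2))) i := by
    intro w i
    simp [mulVec, dotProduct, hAdef, Matrix.map_apply]
  let y' : Fin n → ZMod 2 := fun i => ((y i : ZMod 2))
  calc ((y ⬝ᵥ G.mulVec (fun k => G⁻¹ k k) : ℤ) : ZMod 2)
      = y' ⬝ᵥ A.mulVec (fun k => B k k) := by
        rw [castdot]
        refine congrArg _ ?_
        funext i
        rw [castmul]
        simp [hBdef, Matrix.map_apply]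
    _ = y' ⬝ᵥ (fun i => A i i) := by rw [key2]
    _ = ∑ i, A i i * y' i := by simp [dotProduct, mul_comm]
    _ = y' ⬝ᵥ A.mulVec y' := (quad_diag A hAsymm y').symm
    _ = ((y ⬝ᵥ G.mulVec y : ℤ) : ZMod 2) := by
        rw [castdot]
        refine congrArg _ ?_
        funext i
        rw [castmul]
end

section
/- Let G ∈ ℤ^{n×n} be a symmetric, positive definite, unimodular matrix, and let u, z ∈ ℤⁿ be two characteristic coefficient vectors for G. Then uᵀGu - zᵀGz ≡ 0 (mod 8). -/
open Matrix

/-- A vector `z ∈ ℤⁿ` is a characteristic coefficient vector for `G` if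
`yᵀGz ≡ yᵀGy (mod 2)` for all `y ∈ ℤⁿ`. -/
def IsCharCoeffVec {n : ℕ} (G : Matrix (Fin n) (Fin n) ℤ) (z : Fin n → ℤ) : Prop :=
  ∀ y : Fin n → ℤ, y ⬝ᵥ G.mulVec z ≡ y ⬝ᵥ G.mulVec y [ZMOD 2]

/-- Any two characteristic coefficient vectors have squared norms (w.r.t. `G`)
congruent modulo 8. -/
theorem charVec_norm_mod_eight {n : ℕ} (G : Matrix (Fin n) (Fin n) ℤ)
    (hsymm : G.IsSymm) (hpos : (G.map (Int.cast : ℤ → ℝ)).PosDef)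
    (hdet : G.det = 1 ∨ G.det = -1)
    (u z : Fin n → ℤ) (hu : IsCharCoeffVec G u) (hz : IsCharCoeffVec G z) :
    u ⬝ᵥ G.mulVec u - z ⬝ᵥ G.mulVec z ≡ 0 [ZMOD 8] := by
  -- Step 1: G(u - z) ≡ 0 mod 2 componentwise.
  have h1 : ∀ i, ((G.mulVec (u - z)) i : ZMod 2) = 0 := by
    intro i
    have h := ((hu (Pi.single i 1)).trans (hz (Pi.single i 1)).symm)
    have h' : (2 : ℤ) ∣ (Pi.single i 1 ⬝ᵥ G.mulVec u - Pi.single i 1 ⬝ᵥ G.mulVec z) :=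
      Int.ModEq.dvd h.symm
    rw [single_dotProduct, single_dotProduct, one_mul, one_mul] at h'
    have heq : (G.mulVec (u - z)) i = G.mulVec u i - G.mulVec z i := by
      rw [mulVec_sub]; rfl
    rw [heq]
    exact_mod_cast (ZMod.intCast_zmod_eq_zero_iff_dvd _ 2).mpr h' 
  -- Step 2: since det G is a unit mod 2, u ≡ z mod 2 componentwise.
  have h2 : ∀ i, (2 : ℤ) ∣ (u i - z i) := by
    intro i
    set f : ℤ →+* ZMod 2 := Int.castRingHom (ZMod 2)
    have hmap : (G.map f).mulVec (f ∘ (u - z)) = 0 := by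
      funext j
      rw [← RingHom.map_mulVec]
      exact h1 j
    have hunit : IsUnit (G.map f) := by
      rw [Matrix.isUnit_iff_isUnit_det]
      show IsUnit (f.mapMatrix G).det
      rw [← RingHom.map_det f]
      rcases hdet with h | h <;> simp [h, f]
    have hinj : Function.Injective (G.map f).mulVec :=
      mulVec_injective_iff_isUnit.mpr hunit
    have hz0 : f ∘ (u - z) = 0 := by
      apply hinj
      rw [hmap, Matrix.mulVec_zero]
    have : f ((u - z) i) = 0 := congrFun hz0 i
    have := (ZMod.intCast_zmod_eq_zero_iff_dvd _ 2).mp this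
    simpa using this
  -- Step 3: write u = z + 2v.
  choose v hv using h2
  have huz : u = fun i => z i + 2 * v i := by
    funext i; linarith [hv i]
  -- abbreviations
  set a := v ⬝ᵥ G.mulVec z with ha
  set b := v ⬝ᵥ G.mulVec v with hb
  -- symmetry: z ⬝ᵥ G v = v ⬝ᵥ G z
  have hsym : z ⬝ᵥ G.mulVec v = a := by
    rw [ha, Matrix.dotProduct_mulVec, ← Matrix.mulVec_transpose, hsymm.eq,
      dotProduct_comm]
  have hexp : u ⬝ᵥ G.mulVec u - z ⬝ᵥ G.mulVec z = 4 * (a + b) := by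
    have h2v : u = z + (2 : ℤ) • v := by
      rw [huz]; funext i; simp [mul_comm]
    rw [h2v, Matrix.mulVec_add, Matrix.mulVec_smul, add_dotProduct,
      smul_dotProduct, dotProduct_add, dotProduct_add,
      dotProduct_smul, dotProduct_smul, hsym]
    simp only [smul_eq_mul, ← ha, ← hb]
    ring
  have hab : (2 : ℤ) ∣ (a + b) := by
    have hdvd : (2 : ℤ) ∣ (b - a) := by
      rw [ha, hb]; exact (hz v).dvd
    obtain ⟨k, hk⟩ := hdvd
    exact ⟨a + k, by linarith⟩
  rw [hexp]
  obtain ⟨k, hk⟩ := hab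
  rw [hk]
  have : 4 * (2 * k) = 8 * k := by ring
  rw [this]
  exact (Int.modEq_iff_dvd.mpr (by simp)).symm
end

section
/- Let G ∈ ℤ^{n×n} be a symmetric, positive definite matrix with det G = 1, whose entries satisfy |G_{i,j}| ≤ M for all i,j, where M is a positive integer. If z ∈ ℤⁿ satisfies zᵀGz ≤ n, then ‖z‖² ≤ (nM)^{n+1}. -/
/-!
Put `w = adj(G) z`, so that `G w = z` because `det G = 1`. Cauchy–Schwarz for the positive
semidefinite form of `G` gives `‖z‖⁴ = (zᵀ G w)² ≤ (zᵀ G z) (zᵀ adj(G) z)`. The entries of `adj(G)`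
are `(n-1)`-minors of `G`, hence at most `(n-1)! M^(n-1)` in absolute value, so
`zᵀ adj(G) z ≤ (n-1)! M^(n-1) (∑ |zᵢ|)² ≤ n! M^(n-1) ‖z‖²`. Dividing by `‖z‖²` and using
`zᵀ G z ≤ n` leaves `‖z‖² ≤ n · n! M^(n-1) ≤ (nM)^(n+1)`.
-/

open Matrix Finset
open scoped Nat

namespace Matrix

variable {n R : Type*} [Fintype n] [CommRing R] [LinearOrder R] [IsStrictOrderedRing R]

theorem dotProduct_mulVec_sq_le [DecidableEq n] {A : Matrix n n R} (hA : A.IsSymm)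
    (hA₀ : ∀ x, 0 ≤ x ⬝ᵥ A *ᵥ x) (x y : n → R) :
    (x ⬝ᵥ A *ᵥ y) ^ 2 ≤ (x ⬝ᵥ A *ᵥ x) * (y ⬝ᵥ A *ᵥ y) := by
  simpa only [toBilin'_apply'] using
    (toBilin' A).apply_sq_le_of_symm (by simpa only [toBilin'_apply'] using hA₀)
      (LinearMap.BilinForm.isSymm_iff.mp (isSymm_toBilin'_iff_isSymm.mpr hA)) x y

theorem sq_dotProduct_self_le_of_det_eq_one [DecidableEq n] {A : Matrix n n R}
    (hA : A.IsSymm) (hA₀ : ∀ x, 0 ≤ x ⬝ᵥ A *ᵥ x) (hdet : A.det = 1) (z : n → R) :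
    (z ⬝ᵥ z) ^ 2 ≤ (z ⬝ᵥ A *ᵥ z) * (z ⬝ᵥ A.adjugate *ᵥ z) := by
  have hAw : A *ᵥ (A.adjugate *ᵥ z) = z := by
    rw [mulVec_mulVec, mul_adjugate, hdet, one_smul, one_mulVec]
  have h := dotProduct_mulVec_sq_le hA hA₀ z (A.adjugate *ᵥ z)
  rwa [hAw, dotProduct_comm (A.adjugate *ᵥ z)] at h

theorem abs_dotProduct_mulVec_le {A : Matrix n n R} {B : R} (hB : ∀ i j, |A i j| ≤ B)
    (x y : n → R) : |x ⬝ᵥ A *ᵥ y| ≤ B * (∑ i, |x i|) * ∑ j, |y j| :=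
  calc |x ⬝ᵥ A *ᵥ y| ≤ ∑ i, |x i| * ∑ j, |A i j| * |y j| := by
        refine (abs_sum_le_sum_abs _ _).trans (sum_le_sum fun i _ => ?_)
        rw [abs_mul]
        gcongr
        exact (abs_sum_le_sum_abs _ _).trans_eq (by simp only [abs_mul])
    _ ≤ ∑ i, |x i| * ∑ j, B * |y j| := by gcongr with i _ j; exact hB i j
    _ = B * (∑ i, |x i|) * ∑ j, |y j| := by simp only [← mul_sum, ← sum_mul]; ring

theorem sq_sum_abs_le_card_mul_dotProduct_self (x : n → R) :
    (∑ i, |x i|) ^ 2 ≤ Fintype.card n * (x ⬝ᵥ x) := by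
  simpa only [sq_abs, card_univ, sq, dotProduct, abs_mul_abs_self] using
    sq_sum_le_card_mul_sum_sq (s := univ) (f := fun i => |x i|)

theorem abs_dotProduct_mulVec_self_le {A : Matrix n n R} {B : R} (hB : ∀ i j, |A i j| ≤ B)
    (x : n → R) : |x ⬝ᵥ A *ᵥ x| ≤ B * (Fintype.card n * (x ⬝ᵥ x)) := by
  cases isEmpty_or_nonempty n
  · simp [dotProduct]
  have hB₀ : 0 ≤ B := (abs_nonneg _).trans (hB (Classical.arbitrary n) (Classical.arbitrary n))
  calc |x ⬝ᵥ A *ᵥ x| ≤ B * (∑ i, |x i|) ^ 2 := by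
        rw [sq, ← mul_assoc]; exact abs_dotProduct_mulVec_le hB x x
    _ ≤ B * (Fintype.card n * (x ⬝ᵥ x)) := by
        gcongr; exact sq_sum_abs_le_card_mul_dotProduct_self x

theorem abs_adjugate_le {m : ℕ} {A : Matrix (Fin (m + 1)) (Fin (m + 1)) R} {B : R}
    (hB : ∀ i j, |A i j| ≤ B) (i j : Fin (m + 1)) : |A.adjugate i j| ≤ m ! * B ^ m := by
  rw [adjugate_fin_succ_eq_det_submatrix, abs_mul, abs_pow, abs_neg, abs_one, one_pow, one_mul]
  simpa [nsmul_eq_mul] using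
    det_le (abv := AbsoluteValue.abs) (A := A.submatrix j.succAbove i.succAbove) fun _ _ => hB _ _

theorem dotProduct_self_le_of_det_eq_one [DecidableEq n] {A : Matrix n n R} (hA : A.IsSymm)
    (hA₀ : ∀ x, 0 ≤ x ⬝ᵥ A *ᵥ x) (hdet : A.det = 1) {B : R}
    (hB : ∀ i j, |A.adjugate i j| ≤ B) (z : n → R) :
    z ⬝ᵥ z ≤ Fintype.card n * B * (z ⬝ᵥ A *ᵥ z) := by
  rcases eq_or_ne z 0 with rfl | hz
  · simp
  have hz₀ : 0 < z ⬝ᵥ z :=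
    (sum_nonneg fun i _ => mul_self_nonneg (z i)).lt_of_ne' (dotProduct_self_eq_zero.not.mpr hz)
  refine le_of_mul_le_mul_left ?_ hz₀
  calc (z ⬝ᵥ z) * (z ⬝ᵥ z) = (z ⬝ᵥ z) ^ 2 := (sq _).symm
    _ ≤ (z ⬝ᵥ A *ᵥ z) * (z ⬝ᵥ A.adjugate *ᵥ z) :=
        sq_dotProduct_self_le_of_det_eq_one hA hA₀ hdet z
    _ ≤ (z ⬝ᵥ A *ᵥ z) * (B * (Fintype.card n * (z ⬝ᵥ z))) := by
        gcongr
        · exact hA₀ z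
        · exact (le_abs_self _).trans (abs_dotProduct_mulVec_self_le hB z)
    _ = (z ⬝ᵥ z) * (Fintype.card n * B * (z ⬝ᵥ A *ᵥ z)) := by ring

end Matrix

theorem Matrix.dotProduct_mulVec_nonneg_of_posSemidef_map_intCast {n : Type*} [Fintype n]
    {A : Matrix n n ℤ} (hA : (A.map (Int.cast : ℤ → ℝ)).PosSemidef) (x : n → ℤ) :
    0 ≤ x ⬝ᵥ A *ᵥ x := by
  have hcast : ((x ⬝ᵥ A *ᵥ x : ℤ) : ℝ) =
      star (Int.cast ∘ x) ⬝ᵥ A.map Int.cast *ᵥ (Int.cast ∘ x) := by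
    rw [star_trivial, ← eq_intCast (Int.castRingHom ℝ), RingHom.map_dotProduct]
    congr 1
    ext i
    exact RingHom.map_mulVec _ _ _ _
  exact_mod_cast hcast ▸ hA.dotProduct_mulVec_nonneg (Int.cast ∘ x)

/-- If `G` is symmetric positive definite with determinant 1 and entries
bounded by `M`, then any integer vector `z` with `zᵀGz ≤ n` satisfies
`‖z‖² ≤ (nM)^{n+1}`. -/
theorem short_vector_bit_complexity {n : ℕ} (G : Matrix (Fin n) (Fin n) ℤ)
    (hsymm : G.IsSymm) (hpos : (G.map (Int.cast : ℤ → ℝ)).PosDef)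
    (hdet : G.det = 1) (M : ℤ) (hM : 1 ≤ M) (hbound : ∀ i j, |G i j| ≤ M)
    (z : Fin n → ℤ) (hz : z ⬝ᵥ G.mulVec z ≤ (n : ℤ)) :
    ∑ i, (z i) ^ 2 ≤ ((n : ℤ) * M) ^ (n + 1) := by
  obtain _ | m := n
  · simp
  have hG₀ := G.dotProduct_mulVec_nonneg_of_posSemidef_map_intCast hpos.posSemidef
  have hS := dotProduct_self_le_of_det_eq_one hsymm hG₀ hdet (abs_adjugate_le hbound) z
  calc ∑ i, z i ^ 2 = z ⬝ᵥ z := by simp only [dotProduct, sq]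
    _ ≤ (m + 1) * (m ! * M ^ m) * (z ⬝ᵥ G *ᵥ z) := by simpa using hS
    _ ≤ (m + 1) * ((m + 1) ^ m * M ^ (m + 2)) * (m + 1) := by
        push_cast at hz
        gcongr
        · exact hG₀ z
        · exact_mod_cast m.factorial_le_pow.trans (Nat.pow_le_pow_left m.le_succ m)
        · omega
    _ = ((↑(m + 1) : ℤ) * M) ^ (m + 1 + 1) := by push_cast; rw [mul_pow]; ring
end
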